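/- arXiv:2402.11387 — 3 statements merged into one kernel-verified Lean document; each statement's English description precedes it below -/
import Mathlib

section
/- Let H be a graph with at least one edge and no isolated edges, let k0 be the minimum over all edges uv of H of max{d_H(u), d_H(v)} − 1, and let k1' be the minimum of wt1(uv) over all edges uv of H with wt0(uv) = k0. Then in any H-saturated graph G, the set of vertices of G of degree at most k0 having no neighbor of degree at least k1' forms a clique. -/
open SimpleGraph

/-- `G` contains a subgraph isomorphic to `H`. -/
def ContainsCopy {α β : Type*} (G : SimpleGraph α) (H : SimpleGraph β) : Prop :=
  ∃ f : β → α, Function.Injective f ∧ ∀ ⦃u v : β⦄, H.Adj u v → G.Adj (f u) (f v)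

/-- `G` is `H`-saturated: `G` is `H`-free but adding any edge creates a copy of `H`. -/
def IsSat {α β : Type*} (G : SimpleGraph α) (H : SimpleGraph β) : Prop :=
  ¬ ContainsCopy G H ∧
    ∀ x y : α, x ≠ y → ¬ G.Adj x y →
      ContainsCopy (G ⊔ SimpleGraph.fromEdgeSet {Sym2.mk x y}) H

/-- The degree of a vertex. -/
noncomputable def deg {α : Type*} (G : SimpleGraph α) (v : α) : ℕ :=
  (G.neighborSet v).ncard

/-- `wt0 uv = max (d u) (d v) - 1`. -/
noncomputable def wt0 {β : Type*} (H : SimpleGraph β) (u v : β) : ℕ :=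
  max (deg H u) (deg H v) - 1

/-- The neighborhood of the edge `uv`: `(N(u) - v) ∪ (N(v) - u)`. -/
def edgeNbhd {β : Type*} (H : SimpleGraph β) (u v : β) : Set β :=
  (H.neighborSet u \ {v}) ∪ (H.neighborSet v \ {u})

/-- `wt1 uv`: the maximum degree of a vertex in the neighborhood of the edge `uv`. -/
noncomputable def wt1 {β : Type*} (H : SimpleGraph β) (u v : β) : ℕ :=
  sSup (deg H '' edgeNbhd H u v)

/-- `k0`: the minimum of `wt0` over the edges of `H`. -/
noncomputable def paramK0 {β : Type*} (H : SimpleGraph β) : ℕ :=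
  sInf {k | ∃ u v, H.Adj u v ∧ wt0 H u v = k}

/-- `k1`: the minimum of `wt1` over the edges of `H`. -/
noncomputable def paramK1 {β : Type*} (H : SimpleGraph β) : ℕ :=
  sInf {k | ∃ u v, H.Adj u v ∧ wt1 H u v = k}

/-- `k1'`: the minimum of `wt1` over the edges of `H` minimizing `wt0`. -/
noncomputable def paramK1p {β : Type*} (H : SimpleGraph β) : ℕ :=
  sInf {k | ∃ u v, H.Adj u v ∧ wt0 H u v = paramK0 H ∧ wt1 H u v = k}

/-- `k0'`: the minimum of `wt0` over the edges of `H` minimizing `wt1`. -/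
noncomputable def paramK0p {β : Type*} (H : SimpleGraph β) : ℕ :=
  sInf {k | ∃ u v, H.Adj u v ∧ wt1 H u v = paramK1 H ∧ wt0 H u v = k}

/-!
If `x` and `y` were non-adjacent, a copy of `H` in `G + xy` would have to use the new edge,
as the image of some edge `uv` of `H`. Degrees grow by at most one when adding `xy`, so
`wt0 uv ≤ k0`, i.e. `uv` is one of the edges over which `k1'` is minimized, and some
`w ∈ N(uv)` has degree `wt1 uv ≥ k1'`. But `w` is mapped to a `G`-neighbor of `x` or `y`,
whose degree is below `k1'` and unchanged by adding `xy`.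
-/

section SupEdge

variable {α : Type*} {G : SimpleGraph α} {x y w : α}

lemma neighborSet_sup_edge_subset_insert :
    (G ⊔ edge x y).neighborSet x ⊆ insert y (G.neighborSet x) := by
  intro z hz
  rcases hz with hz | hz
  · exact Set.mem_insert_of_mem _ hz
  · obtain ⟨⟨-, rfl⟩ | ⟨-, rfl⟩, hxz⟩ := (edge_adj x y x z).mp hz
    · exact Set.mem_insert _ _
    · exact absurd rfl hxz

lemma neighborSet_sup_edge_of_ne (hwx : w ≠ x) (hwy : w ≠ y) :
    (G ⊔ edge x y).neighborSet w = G.neighborSet w := by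
  ext z
  simp only [mem_neighborSet, sup_adj, edge_adj, or_iff_left_iff_imp]
  rintro ⟨⟨rfl, -⟩ | ⟨rfl, -⟩, -⟩ <;> contradiction

lemma deg_sup_edge_le [Finite α] : deg (G ⊔ edge x y) x ≤ deg G x + 1 :=
  (Set.ncard_le_ncard neighborSet_sup_edge_subset_insert (Set.toFinite _)).trans
    (Set.ncard_insert_le _ _)

lemma deg_sup_edge_of_ne (hwx : w ≠ x) (hwy : w ≠ y) :
    deg (G ⊔ edge x y) w = deg G w :=
  congrArg Set.ncard (neighborSet_sup_edge_of_ne hwx hwy)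

end SupEdge

section Copy

variable {α β : Type*} {G : SimpleGraph α} {H : SimpleGraph β} {f : β → α}

lemma deg_le_deg_of_injective [Finite α] (hinj : Function.Injective f)
    (hmap : ∀ ⦃u v : β⦄, H.Adj u v → G.Adj (f u) (f v)) (a : β) :
    deg H a ≤ deg G (f a) := by
  have hsub : f '' H.neighborSet a ⊆ G.neighborSet (f a) := by
    rintro _ ⟨b, hb, rfl⟩
    exact hmap hb
  calc deg H a = (f '' H.neighborSet a).ncard := (Set.ncard_image_of_injective _ hinj).symm
    _ ≤ deg G (f a) := Set.ncard_le_ncard hsub (Set.toFinite _)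

variable {x y : α}

lemma exists_adj_eq_of_copy_sup_edge (hfree : ¬ContainsCopy G H) (hinj : Function.Injective f)
    (hmap : ∀ ⦃u v : β⦄, H.Adj u v → (G ⊔ edge x y).Adj (f u) (f v)) :
    ∃ u v, H.Adj u v ∧ f u = x ∧ f v = y := by
  by_contra! hnot
  refine hfree ⟨f, hinj, fun u v huv ↦ ?_⟩
  rcases hmap huv with hG | hxy
  · exact hG
  · obtain ⟨⟨hu, hv⟩ | ⟨hu, hv⟩, -⟩ := (edge_adj x y _ _).mp hxy
    · exact absurd hv (hnot u v huv hu)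
    · exact absurd hu (hnot v u huv.symm hv)

lemma adj_and_deg_le_of_copy_sup_edge [Finite α] (hinj : Function.Injective f)
    (hmap : ∀ ⦃u v : β⦄, H.Adj u v → (G ⊔ edge x y).Adj (f u) (f v))
    {u v w : β} (hu : f u = x) (hv : f v = y) (hw : w ∈ H.neighborSet u \ {v}) :
    G.Adj x (f w) ∧ deg H w ≤ deg G (f w) := by
  obtain ⟨huw, hwv⟩ := hw
  have hfwx : f w ≠ x := hu ▸ hinj.ne huw.ne.symm
  have hfwy : f w ≠ y := hv ▸ hinj.ne hwv
  have hadj : f w ∈ insert y (G.neighborSet x) :=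
    neighborSet_sup_edge_subset_insert (hu ▸ hmap huw)
  refine ⟨(Set.mem_insert_iff.mp hadj).resolve_left hfwy, ?_⟩
  calc deg H w ≤ deg (G ⊔ edge x y) (f w) := deg_le_deg_of_injective hinj hmap w
    _ = deg G (f w) := deg_sup_edge_of_ne hfwx hfwy

end Copy

section Params

variable {β : Type*} {H : SimpleGraph β} {u v : β}

lemma paramK0_le_wt0 (huv : H.Adj u v) : paramK0 H ≤ wt0 H u v :=
  Nat.sInf_le ⟨u, v, huv, rfl⟩

lemma paramK1p_le_wt1 (huv : H.Adj u v) (h0 : wt0 H u v = paramK0 H) :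
    paramK1p H ≤ wt1 H u v :=
  Nat.sInf_le ⟨u, v, huv, h0, rfl⟩

lemma exists_mem_edgeNbhd_deg_eq_wt1 [Finite β] (h : (edgeNbhd H u v).Nonempty) :
    ∃ w ∈ edgeNbhd H u v, deg H w = wt1 H u v :=
  (h.image _).csSup_mem (Set.toFinite _)

end Params

theorem stmt2_general {α β : Type*} [Fintype α] [Fintype β] (H : SimpleGraph β)
    (hiso : ∀ u v, H.Adj u v → (edgeNbhd H u v).Nonempty)
    (G : SimpleGraph α) (hG : IsSat G H) :
    ∀ x y : α,
      deg G x ≤ paramK0 H → (∀ w, G.Adj x w → deg G w < paramK1p H) →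
      deg G y ≤ paramK0 H → (∀ w, G.Adj y w → deg G w < paramK1p H) →
      x ≠ y → G.Adj x y := by
  intro x y hx hxN hy hyN hne
  by_contra hxy
  obtain ⟨f, hinj, hmap⟩ : ContainsCopy (G ⊔ edge x y) H := hG.2 x y hne hxy
  obtain ⟨u, v, huv, hu, hv⟩ := exists_adj_eq_of_copy_sup_edge hG.1 hinj hmap
  have hmap' : ∀ ⦃a b : β⦄, H.Adj a b → (G ⊔ edge y x).Adj (f a) (f b) := by
    rwa [edge_comm]
  have hdu : deg H u ≤ deg G x + 1 :=
    (hu ▸ deg_le_deg_of_injective hinj hmap u).trans deg_sup_edge_le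
  have hdv : deg H v ≤ deg G y + 1 :=
    (hv ▸ deg_le_deg_of_injective hinj hmap' v).trans deg_sup_edge_le
  have h0 : wt0 H u v = paramK0 H := le_antisymm (by unfold wt0; omega) (paramK0_le_wt0 huv)
  have h1 := paramK1p_le_wt1 huv h0
  obtain ⟨w, hw | hw, hdw⟩ := exists_mem_edgeNbhd_deg_eq_wt1 (hiso u v huv)
  · obtain ⟨hadj, hle⟩ := adj_and_deg_le_of_copy_sup_edge hinj hmap hu hv hw
    have := hxN _ hadj
    omega
  · obtain ⟨hadj, hle⟩ := adj_and_deg_le_of_copy_sup_edge hinj hmap' hv hu hw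
    have := hyN _ hadj
    omega

/-- Prop. (neighbor clique, part 2): in an `H`-saturated graph, the vertices of degree at
most `k0` having no neighbor of degree at least `k1'` form a clique. -/
theorem stmt2 {α β : Type*} [Fintype α] [Fintype β] (H : SimpleGraph β)
    (hedge : ∃ u v, H.Adj u v)
    (hiso : ∀ u v, H.Adj u v → (edgeNbhd H u v).Nonempty)
    (G : SimpleGraph α) (hG : IsSat G H) :
    ∀ x y : α,
      deg G x ≤ paramK0 H → (∀ w, G.Adj x w → deg G w < paramK1p H) →
      deg G y ≤ paramK0 H → (∀ w, G.Adj y w → deg G w < paramK1p H) →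
      x ≠ y → G.Adj x y :=
  stmt2_general H hiso G hG
end

section
/- Let δ and k be positive integers with δ < k. If G is a nonempty graph with minimum degree δ in which every vertex of degree exactly δ has a neighbor of degree at least k, then the average degree of G satisfies d(G) ≥ δ + (k − δ)/(k + 1). -/
open SimpleGraph

/-!
Since `δ + (k - δ) / (k + 1) = k (δ + 1) / (k + 1)`, it suffices to show
`k (δ + 1) n ≤ (k + 1) ∑ deg`. Compare each vertex with the target `k (δ + 1) / (k + 1)`:
a vertex of degree `δ` falls short by `(k - δ) / (k + 1)`, a vertex of degree `d ≥ k` exceeds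
it by at least `(k - δ) d / (k + 1)`, and any other vertex has degree at least `δ + 1`.
Since each vertex of degree `δ` is adjacent to a vertex of degree at least `k`, the number of
such vertices is at most the sum of the degrees of the vertices of degree at least `k`, so the
surpluses pay for the shortfalls.
-/

namespace SimpleGraph

open Finset

variable {V : Type*} [Fintype V] (G : SimpleGraph V) [DecidableRel G.Adj]

theorem deg_eq_degree (v : V) : deg G v = G.degree v := by
  rw [deg, Set.ncard_eq_toFinset_card', Set.toFinset_card, card_neighborSet_eq_degree]

theorem card_le_sum_degree_of_forall_exists_adj [DecidableEq V] {S B : Finset V}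
    (h : ∀ v ∈ S, ∃ w ∈ B, G.Adj v w) : #S ≤ ∑ w ∈ B, G.degree w := by
  calc #S ≤ #(B.biUnion fun w => G.neighborFinset w) := by
        refine card_le_card fun v hv => ?_
        obtain ⟨w, hwB, hvw⟩ := h v hv
        exact mem_biUnion.2 ⟨w, hwB, (G.mem_neighborFinset w v).2 hvw.symm⟩
    _ ≤ ∑ w ∈ B, #(G.neighborFinset w) := card_biUnion_le
    _ = ∑ w ∈ B, G.degree w := by simp only [card_neighborFinset_eq_degree]


theorem mul_card_le_mul_sum_degree {δ k : ℕ} (hδk : δ < k) (hmin : ∀ v, δ ≤ G.degree v)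
    (hnbr : ∀ v, G.degree v = δ → ∃ w, G.Adj v w ∧ k ≤ G.degree w) :
    k * (δ + 1) * Fintype.card V ≤ (k + 1) * ∑ v, G.degree v := by
  classical
  set S := univ.filter fun v => G.degree v = δ
  set B := univ.filter fun v => k ≤ G.degree v
  have hSB : (#S : ℤ) ≤ ∑ w ∈ B, (G.degree w : ℤ) := by
    exact_mod_cast G.card_le_sum_degree_of_forall_exists_adj fun v hv => by
      obtain ⟨w, hvw, hw⟩ := hnbr v (mem_filter.1 hv).2
      exact ⟨w, mem_filter.2 ⟨mem_univ w, hw⟩, hvw⟩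
  have hvertex : ∀ v, (k * (δ + 1) : ℤ) + (k - δ) *
      ((if k ≤ G.degree v then (G.degree v : ℤ) else 0) - if G.degree v = δ then 1 else 0)
        ≤ (k + 1) * G.degree v := by
    intro v
    obtain hδv | hδv := (hmin v).eq_or_lt
    · rw [← hδv, if_neg hδk.not_ge, if_pos rfl]
      push_cast
      linarith
    · split_ifs <;> zify at * <;> nlinarith
  have hsum := sum_le_sum fun v (_ : v ∈ univ) => hvertex v
  simp only [sum_add_distrib, ← mul_sum, sum_sub_distrib, ← sum_filter, sum_const,
    card_univ, nsmul_eq_mul, mul_one] at hsum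
  zify
  nlinarith

end SimpleGraph

theorem stmt4_general {α : Type*} [Fintype α] [Nonempty α] (δ k : ℕ)
    (hδk : δ < k) (G : SimpleGraph α)
    (hmin : (∀ v, δ ≤ deg G v) ∧ ∃ v, deg G v = δ)
    (hnbr : ∀ v, deg G v = δ → ∃ w, G.Adj v w ∧ k ≤ deg G w) :
    (δ : ℝ) + ((k : ℝ) - (δ : ℝ)) / ((k : ℝ) + 1) ≤
      (∑ v : α, (deg G v : ℝ)) / (Fintype.card α : ℝ) := by
  classical
  simp only [G.deg_eq_degree] at hmin hnbr ⊢
  have hcount := G.mul_card_le_mul_sum_degree hδk hmin.1 hnbr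
  have hn : (0 : ℝ) < Fintype.card α := by exact_mod_cast Fintype.card_pos
  have hk : (0 : ℝ) < k + 1 := by positivity
  have hbound : (δ : ℝ) + (k - δ) / (k + 1) = k * (δ + 1) / (k + 1) := by
    field_simp
    ring
  rw [le_div_iff₀ hn, hbound, div_mul_eq_mul_div, div_le_iff₀ hk, mul_comm _ ((k : ℝ) + 1)]
  exact_mod_cast hcount

/-- Prop. warmup, first part: if `G` has minimum degree `δ` and every degree-`δ` vertex has
a neighbor of degree at least `k > δ`, then `d(G) ≥ δ + (k - δ)/(k + 1)`. -/
theorem stmt4 {α : Type*} [Fintype α] [Nonempty α] (δ k : ℕ)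
    (hδ : 0 < δ) (hδk : δ < k) (G : SimpleGraph α)
    (hmin : (∀ v, δ ≤ deg G v) ∧ ∃ v, deg G v = δ)
    (hnbr : ∀ v, deg G v = δ → ∃ w, G.Adj v w ∧ k ≤ deg G w) :
    (δ : ℝ) + ((k : ℝ) - (δ : ℝ)) / ((k : ℝ) + 1) ≤
      (∑ v : α, (deg G v : ℝ)) / (Fintype.card α : ℝ) :=
  stmt4_general δ k hδk G hmin hnbr
end

section
/- Let k0 and k1' be positive integers with k0 < k1', and let G be a graph with property (P) with respect to k0 and k1'. Then the set of vertices v of G with d_G(v) ≤ k0 such that either (i) v has no neighbor of degree at least k1', or (ii) v has exactly one neighbor w of degree at least k1', with d_G(w) = k1' and N_G(v) ∩ N_G(w) ≠ ∅, forms a clique in G. -/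
open SimpleGraph

/-- Property (P) with respect to positive integers `k0 < k1'`. -/
def PropertyP {α : Type*} (G : SimpleGraph α) (k0 k1p : ℕ) : Prop :=
  ∀ x y : α, x ≠ y → ¬ G.Adj x y →
    deg G x ≤ k0 → deg G y ≤ k0 →
    (∃ z ∈ G.neighborSet x,
      k1p ≤ (G.neighborSet z \ (G.neighborSet x ∪ {y})).ncard) ∨
    (∃ z' ∈ G.neighborSet y,
      k1p ≤ (G.neighborSet z' \ (G.neighborSet y ∪ {x})).ncard)

/-
If `x` satisfies (i) or (ii), then no neighbour `z` of `x` has `k1'` neighbours outside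
`N(x) ∪ {y}`: in case (i) already `d(z) < k1'`, and in case (ii) the only candidate is `w`,
which has `d(w) = k1'` and loses a common neighbour with `x`. Hence for two nonadjacent such
vertices neither alternative of property (P) can hold.
-/

section Neighbourhood

variable {α : Type*} [Finite α] (G : SimpleGraph α)

lemma ncard_neighborSet_diff_le_deg (z : α) (s : Set α) :
    (G.neighborSet z \ s).ncard ≤ deg G z :=
  Set.ncard_le_ncard Set.sdiff_subset (Set.toFinite _)

lemma ncard_neighborSet_diff_lt_deg {z u : α} {s : Set α} (hu : u ∈ G.neighborSet z)
    (hus : u ∈ s) : (G.neighborSet z \ s).ncard < deg G z :=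
  Set.ncard_lt_ncard (Set.sdiff_ssubset_left_iff.mpr ⟨u, hu, hus⟩) (Set.toFinite _)

lemma ncard_neighborSet_diff_lt_of_adj {k1p : ℕ} {x z : α} (y : α)
    (hx : (∀ w, G.Adj x w → deg G w < k1p) ∨
          ∃ w, G.Adj x w ∧ k1p ≤ deg G w ∧
            (∀ w', G.Adj x w' → k1p ≤ deg G w' → w' = w) ∧
            deg G w = k1p ∧ (G.neighborSet x ∩ G.neighborSet w).Nonempty)
    (hz : G.Adj x z) :
    (G.neighborSet z \ (G.neighborSet x ∪ {y})).ncard < k1p := by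
  rcases hx with hlow | ⟨w, -, -, hunique, hdegw, u, hux, huw⟩
  · exact (ncard_neighborSet_diff_le_deg G z _).trans_lt (hlow z hz)
  · by_cases hdegz : k1p ≤ deg G z
    · obtain rfl := hunique z hz hdegz
      exact hdegw ▸ ncard_neighborSet_diff_lt_deg G huw (Or.inl hux)
    · exact (ncard_neighborSet_diff_le_deg G z _).trans_lt (not_le.mp hdegz)

end Neighbourhood

theorem stmt11_general {α : Type*} [Fintype α] (k0 k1p : ℕ)
    (G : SimpleGraph α) (hP : PropertyP G k0 k1p) :
    ∀ x y : α,
      (deg G x ≤ k0 ∧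
        ((∀ w, G.Adj x w → deg G w < k1p) ∨
          ∃ w, G.Adj x w ∧ k1p ≤ deg G w ∧
            (∀ w', G.Adj x w' → k1p ≤ deg G w' → w' = w) ∧
            deg G w = k1p ∧ (G.neighborSet x ∩ G.neighborSet w).Nonempty)) →
      (deg G y ≤ k0 ∧
        ((∀ w, G.Adj y w → deg G w < k1p) ∨
          ∃ w, G.Adj y w ∧ k1p ≤ deg G w ∧
            (∀ w', G.Adj y w' → k1p ≤ deg G w' → w' = w) ∧
            deg G w = k1p ∧ (G.neighborSet y ∩ G.neighborSet w).Nonempty)) →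
      x ≠ y → G.Adj x y := by
  intro x y ⟨hdegx, hx⟩ ⟨hdegy, hy⟩ hne
  by_contra hxy
  rcases hP x y hne hxy hdegx hdegy with ⟨z, hz, hbig⟩ | ⟨z, hz, hbig⟩
  · exact hbig.not_gt (ncard_neighborSet_diff_lt_of_adj G y hx hz)
  · exact hbig.not_gt (ncard_neighborSet_diff_lt_of_adj G x hy hz)

/-- Prop. (triangle-free neighbor clique): in a graph with property (P), the low-degree
vertices satisfying (i) or (ii) form a clique. -/
theorem stmt11 {α : Type*} [Fintype α] (k0 k1p : ℕ) (hk0 : 0 < k0) (hk : k0 < k1p)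
    (G : SimpleGraph α) (hP : PropertyP G k0 k1p) :
    ∀ x y : α,
      (deg G x ≤ k0 ∧
        ((∀ w, G.Adj x w → deg G w < k1p) ∨
          ∃ w, G.Adj x w ∧ k1p ≤ deg G w ∧
            (∀ w', G.Adj x w' → k1p ≤ deg G w' → w' = w) ∧
            deg G w = k1p ∧ (G.neighborSet x ∩ G.neighborSet w).Nonempty)) →
      (deg G y ≤ k0 ∧
        ((∀ w, G.Adj y w → deg G w < k1p) ∨
          ∃ w, G.Adj y w ∧ k1p ≤ deg G w ∧
            (∀ w', G.Adj y w' → k1p ≤ deg G w' → w' = w) ∧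
            deg G w = k1p ∧ (G.neighborSet y ∩ G.neighborSet w).Nonempty)) →
      x ≠ y → G.Adj x y :=
  stmt11_general k0 k1p G hP
end
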